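/- Let f : D → ℝ³ be a weakly-regular C^{1M} Chebyshev ps-front (‖f_x‖ ≡ ‖f_y‖ ≡ 1) with weakly harmonic map N, so N_xy = N_yx = h·N for some h : D → ℝ. Then at every point p ∈ D where f_x(p) and f_y(p) are linearly independent, one has h(p) = ⟨f_x(p), f_y(p)⟩; that is, N_xy = ⟨f_x, f_y⟩·N at all regular points. -/

import Mathlib

noncomputable section

open Real Set

abbrev E3 : Type := EuclideanSpace ℝ (Fin 3)

/-- Partial derivative in the `x`-direction. -/
noncomputable def pdx {E : Type*} [NormedAddCommGroup E] [NormedSpace ℝ E]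
    (f : ℝ × ℝ → E) (p : ℝ × ℝ) : E := lineDeriv ℝ f p ((1 : ℝ), (0 : ℝ))

/-- Partial derivative in the `y`-direction. -/
noncomputable def pdy {E : Type*} [NormedAddCommGroup E] [NormedSpace ℝ E]
    (f : ℝ × ℝ → E) (p : ℝ × ℝ) : E := lineDeriv ℝ f p ((0 : ℝ), (1 : ℝ))

/-- `f` is C¹ on `D`, and the mixed second partials `∂y∂x f` and `∂x∂y f`
exist at every point of `D`, are continuous on `D`, and agree on `D`. -/
def C1M {E : Type*} [NormedAddCommGroup E] [NormedSpace ℝ E]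
    (D : Set (ℝ × ℝ)) (f : ℝ × ℝ → E) : Prop :=
  ContDiffOn ℝ 1 f D ∧
  (∀ p ∈ D, LineDifferentiableAt ℝ (pdx f) p ((0 : ℝ), (1 : ℝ))) ∧
  (∀ p ∈ D, LineDifferentiableAt ℝ (pdy f) p ((1 : ℝ), (0 : ℝ))) ∧
  ContinuousOn (pdy (pdx f)) D ∧
  ContinuousOn (pdx (pdy f)) D ∧
  (∀ p ∈ D, pdy (pdx f) p = pdx (pdy f) p)

/-- The cross product on ℝ³. -/
noncomputable def cross3 (a b : E3) : E3 :=
  (WithLp.equiv 2 (Fin 3 → ℝ)).symm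
    ![a 1 * b 2 - a 2 * b 1, a 2 * b 0 - a 0 * b 2, a 0 * b 1 - a 1 * b 0]

/-- The Euclidean inner product on ℝ³. -/
noncomputable def dot (a b : E3) : ℝ := inner ℝ a b

/-- `N : D → S²` is weakly harmonic: it is C^{1M}, weakly regular, takes values in the
unit sphere, and `N_xy = N_yx = h • N` for some scalar function `h`. -/
def WeakHarmonic (D : Set (ℝ × ℝ)) (N : ℝ × ℝ → E3) : Prop :=
  C1M D N ∧ (∀ p ∈ D, ‖N p‖ = 1) ∧
  (∀ p ∈ D, pdx N p ≠ 0 ∧ pdy N p ≠ 0) ∧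
  ∃ h : ℝ × ℝ → ℝ, ∀ p ∈ D, pdy (pdx N) p = h p • N p ∧ pdx (pdy N) p = h p • N p

/-- A weakly-regular C^{1M} ps-front with associated weakly harmonic map `N`. -/
def PsFront (D : Set (ℝ × ℝ)) (f N : ℝ × ℝ → E3) : Prop :=
  C1M D f ∧ (∀ p ∈ D, pdx f p ≠ 0 ∧ pdy f p ≠ 0) ∧
  WeakHarmonic D N ∧
  ∀ p ∈ D, pdx f p = cross3 (N p) (pdx N p) ∧ pdy f p = -cross3 (N p) (pdy N p)


/-!
Since `‖N‖ ≡ 1`, `N_x ⊥ N` on `D`; differentiating `⟪N_x, N⟫ = 0` in `y` and inserting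
`N_xy = h • N` gives `h = -⟪N_x, N_y⟫`. On the other hand `f_x = N × N_x`, `f_y = -N × N_y`,
and the Binet–Cauchy identity `⟪a × b, a × c⟫ = ‖a‖² ⟪b, c⟫ - ⟪a, c⟫ ⟪a, b⟫` with `a = N`
turns `⟪f_x, f_y⟫` into `-⟪N_x, N_y⟫` as well.
-/

open Filter Topology Matrix
open scoped RealInnerProductSpace

theorem HasLineDerivAt.inner {E F : Type*} [NormedAddCommGroup E] [NormedSpace ℝ E]
    [NormedAddCommGroup F] [InnerProductSpace ℝ F] {g k : E → F} {g' k' : F} {q v : E}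
    (hg : HasLineDerivAt ℝ g g' q v) (hk : HasLineDerivAt ℝ k k' q v) :
    HasLineDerivAt ℝ (fun r => ⟪g r, k r⟫) (⟪g q, k'⟫ + ⟪g', k q⟫) q v := by
  unfold HasLineDerivAt
  simpa using HasDerivAt.inner ℝ hg hk

theorem HasLineDerivAt.inner_add_inner_eq_zero {E F : Type*} [NormedAddCommGroup E]
    [NormedSpace ℝ E] [NormedAddCommGroup F] [InnerProductSpace ℝ F] {g k : E → F} {g' k' : F}
    {q v : E} {c : ℝ} (hg : HasLineDerivAt ℝ g g' q v) (hk : HasLineDerivAt ℝ k k' q v)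
    (hc : (fun r => ⟪g r, k r⟫) =ᶠ[𝓝 q] fun _ => c) :
    ⟪g q, k'⟫ + ⟪g', k q⟫ = 0 :=
  (hg.inner hk).unique <|
    (show HasLineDerivAt ℝ (fun _ => c) 0 q v from hasDerivAt_const _ c).congr_of_eventuallyEq hc

theorem cross3_eq_toLp_cross (a b : E3) :
    cross3 a b = WithLp.toLp 2 (WithLp.ofLp a ⨯₃ WithLp.ofLp b) := rfl

theorem inner_cross3_cross3 (a b c d : E3) :
    ⟪cross3 a b, cross3 c d⟫ = ⟪a, c⟫ * ⟪b, d⟫ - ⟪a, d⟫ * ⟪b, c⟫ := by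
  simp only [cross3_eq_toLp_cross, EuclideanSpace.inner_eq_star_dotProduct, star_trivial,
    cross_dot_cross]
  simp only [dotProduct_comm]
  ring

theorem HasLineDerivAt.inner_eq_zero_of_norm_eq {E F : Type*} [NormedAddCommGroup E]
    [NormedSpace ℝ E] [NormedAddCommGroup F] [InnerProductSpace ℝ F] {N : E → F} {w : F}
    {q v : E} {c : ℝ} (hN : HasLineDerivAt ℝ N w q v) (hnorm : ∀ᶠ r in 𝓝 q, ‖N r‖ = c) :
    ⟪w, N q⟫ = 0 := by
  have h := hN.inner_add_inner_eq_zero hN (c := c ^ 2) <| by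
    filter_upwards [hnorm] with r hr
    rw [real_inner_self_eq_norm_sq, hr]
  rw [real_inner_comm] at h
  linarith

theorem hasLineDerivAt_pdx {E : Type*} [NormedAddCommGroup E] [NormedSpace ℝ E]
    {g : ℝ × ℝ → E} {q : ℝ × ℝ} (hg : DifferentiableAt ℝ g q) :
    HasLineDerivAt ℝ g (pdx g q) q (1, 0) :=
  hg.lineDifferentiableAt.hasLineDerivAt

theorem hasLineDerivAt_pdy {E : Type*} [NormedAddCommGroup E] [NormedSpace ℝ E]
    {g : ℝ × ℝ → E} {q : ℝ × ℝ} (hg : DifferentiableAt ℝ g q) :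
    HasLineDerivAt ℝ g (pdy g q) q (0, 1) :=
  hg.lineDifferentiableAt.hasLineDerivAt

theorem C1M.differentiableAt {E : Type*} [NormedAddCommGroup E] [NormedSpace ℝ E]
    {D : Set (ℝ × ℝ)} {g : ℝ × ℝ → E} (hD : IsOpen D) (hg : C1M D g) {q : ℝ × ℝ} (hq : q ∈ D) :
    DifferentiableAt ℝ g q :=
  (hg.1.contDiffAt (hD.mem_nhds hq)).differentiableAt one_ne_zero

theorem inner_pdx_self_eq_zero {F : Type*} [NormedAddCommGroup F] [InnerProductSpace ℝ F]
    {D : Set (ℝ × ℝ)} (hD : IsOpen D) {N : ℝ × ℝ → F} (hN : C1M D N) {c : ℝ}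
    (hnorm : ∀ q ∈ D, ‖N q‖ = c) {q : ℝ × ℝ} (hq : q ∈ D) :
    ⟪pdx N q, N q⟫ = 0 :=
  (hasLineDerivAt_pdx (hN.differentiableAt hD hq)).inner_eq_zero_of_norm_eq
    (eventually_of_mem (hD.mem_nhds hq) hnorm)

theorem eq_neg_inner_pdx_pdy_of_pdy_pdx_eq_smul {F : Type*} [NormedAddCommGroup F]
    [InnerProductSpace ℝ F] {D : Set (ℝ × ℝ)} (hD : IsOpen D) {N : ℝ × ℝ → F} (hN : C1M D N) (hsph : ∀ q ∈ D, ‖N q‖ = 1) {h : ℝ × ℝ → ℝ} {p : ℝ × ℝ}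
    (hp : p ∈ D) (hh : pdy (pdx N) p = h p • N p) :
    h p = -⟪pdx N p, pdy N p⟫ := by
  have hNxy : HasLineDerivAt ℝ (pdx N) (pdy (pdx N) p) p (0, 1) :=
    (hN.2.1 p hp).hasLineDerivAt
  have h0 := hNxy.inner_add_inner_eq_zero (hasLineDerivAt_pdy (hN.differentiableAt hD hp)) <|
    eventually_of_mem (hD.mem_nhds hp) fun q hq => inner_pdx_self_eq_zero hD hN hsph hq
  rw [hh, real_inner_smul_left, real_inner_self_eq_norm_sq, hsph p hp] at h0
  linarith

theorem PsFront.inner_pdx_pdy {D : Set (ℝ × ℝ)} (hD : IsOpen D) {f N : ℝ × ℝ → E3}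
    (hps : PsFront D f N) {p : ℝ × ℝ} (hp : p ∈ D) :
    ⟪pdx f p, pdy f p⟫ = -⟪pdx N p, pdy N p⟫ := by
  obtain ⟨-, -, ⟨hN, hsph, -⟩, hcross⟩ := hps
  rw [(hcross p hp).1, (hcross p hp).2, inner_neg_right, inner_cross3_cross3,
    real_inner_self_eq_norm_sq, hsph p hp, inner_pdx_self_eq_zero hD hN hsph hp]
  ring

theorem stmt_8_general (D : Set (ℝ × ℝ)) (hD : IsOpen D)
    (f N : ℝ × ℝ → E3) (hps : PsFront D f N)
    (h : ℝ × ℝ → ℝ)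
    (hh : ∀ p ∈ D, pdy (pdx N) p = h p • N p ∧ pdx (pdy N) p = h p • N p) :
    ∀ p ∈ D, LinearIndependent ℝ ![pdx f p, pdy f p] →
      h p = dot (pdx f p) (pdy f p) ∧
      pdy (pdx N) p = dot (pdx f p) (pdy f p) • N p := by
  intro p hp _
  obtain ⟨hN, hsph, -⟩ := hps.2.2.1
  have hhp : h p = dot (pdx f p) (pdy f p) := by
    rw [dot, hps.inner_pdx_pdy hD hp]
    exact eq_neg_inner_pdx_pdy_of_pdy_pdx_eq_smul hD hN hsph hp (hh p hp).1
  exact ⟨hhp, hhp ▸ (hh p hp).1⟩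

/-- For a weakly-regular C^{1M} Chebyshev ps-front with harmonicity factor `h`
(`N_xy = N_yx = h • N`), one has `h = ⟨f_x,f_y⟩` at every regular point, i.e.
`N_xy = ⟨f_x,f_y⟩ • N` at all points where `f_x`, `f_y` are linearly independent. -/
theorem stmt_8 (D : Set (ℝ × ℝ)) (hD : IsOpen D)
    (f N : ℝ × ℝ → E3) (hps : PsFront D f N)
    (hE : ∀ p ∈ D, ‖pdx f p‖ = 1) (hG : ∀ p ∈ D, ‖pdy f p‖ = 1)
    (h : ℝ × ℝ → ℝ)
    (hh : ∀ p ∈ D, pdy (pdx N) p = h p • N p ∧ pdx (pdy N) p = h p • N p) :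
    ∀ p ∈ D, LinearIndependent ℝ ![pdx f p, pdy f p] →
      h p = dot (pdx f p) (pdy f p) ∧
      pdy (pdx N) p = dot (pdx f p) (pdy f p) • N p :=
  stmt_8_general D hD f N hps h hh

end
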